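/- arXiv:2101.02027 — 2 statements merged into one kernel-verified Lean document; each statement's English description precedes it below -/
import Mathlib

section
/- For every integer n ≥ 0, ∑_{k=0}^{n} 1/((2k+1)·(n-k+1)^2) · C(2k,k)/C(2(n-k+1),n-k+1) · 2^{-4k} = (3·((2n+1)!!)^2 / (2^{2n+3}·(2n+3)!)) · (π² − 2·ψ'(n + 3/2)), where ψ' is the trigamma function. -/
open Real

/-- The trigamma function `ψ'(x) = ∑_{m=0}^∞ 1/(x+m)²`. -/
noncomputable def trigamma (x : ℝ) : ℝ := ∑' m : ℕ, 1 / (x + m) ^ 2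

noncomputable def Cc (n : ℕ) : ℝ :=
  3 * (Nat.doubleFactorial (2 * n + 1) : ℝ) ^ 2 / (2 ^ (2 * n) * (Nat.factorial (2 * n + 3) : ℝ))

noncomputable def bb (n k : ℕ) : ℝ :=
  (Nat.centralBinom k : ℝ) /
    ((2 * k + 1) * ((n + 1 - k : ℕ) : ℝ) ^ 2 * 16 ^ k * (Nat.centralBinom (n + 1 - k) : ℝ) * Cc n)

noncomputable def gg (n k : ℕ) : ℝ :=
  (-(4 * (k : ℝ)) * (6 * ((n + 1 - k : ℕ) : ℝ) + 2 * k + 5) * (Nat.centralBinom k : ℝ)) /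
    ((2 * (n : ℝ) + 3) ^ 3 * (2 * ((n + 1 - k : ℕ) : ℝ) + 1) * ((n + 2 - k : ℕ) : ℝ) * 16 ^ k *
      (Nat.centralBinom (n + 1 - k) : ℝ) * Cc n)

lemma Cc_pos (n : ℕ) : 0 < Cc n := by unfold Cc; positivity
lemma cb_pos (m : ℕ) : (0 : ℝ) < (Nat.centralBinom m : ℝ) := by
  exact_mod_cast Nat.centralBinom_pos m
lemma cb_succ (m : ℕ) : (Nat.centralBinom (m + 1) : ℝ) =
    2 * (2 * m + 1) * (Nat.centralBinom m : ℝ) / ((m : ℝ) + 1) := by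
  have h' : ((m : ℝ) + 1) * (Nat.centralBinom (m + 1) : ℝ)
      = 2 * (2 * m + 1) * (Nat.centralBinom m : ℝ) := by
    exact_mod_cast Nat.succ_mul_centralBinom_succ m
  field_simp; linarith [h']
lemma Cc_succ (n : ℕ) : Cc (n + 1) =
    (2 * (n : ℝ) + 3) ^ 2 * Cc n / (8 * ((n : ℝ) + 2) * (2 * n + 5)) := by
  unfold Cc
  rw [show 2 * (n + 1) + 1 = (2 * n + 1) + 2 by ring, show 2 * (n + 1) + 3 = (2 * n + 3) + 2 by ring,
    Nat.doubleFactorial_add_two]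
  rw [show (2 * n + 3) + 2 = (2 * n + 4) + 1 by ring, Nat.factorial_succ,
    show (2 * n + 4) = (2 * n + 3) + 1 by ring, Nat.factorial_succ]
  have h3 : (2 : ℝ) ^ (2 * (n + 1)) = 4 * 2 ^ (2 * n) := by ring
  rw [h3]
  have hf : (0 : ℝ) < (Nat.factorial (2 * n + 3) : ℝ) := by exact_mod_cast Nat.factorial_pos _
  push_cast
  field_simp
  ring

set_option maxHeartbeats 2000000 in
lemma wz_step (j k : ℕ) :
    bb (k + j + 1) k - bb (k + j) k = gg (k + j) (k + 1) - gg (k + j) k := by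
  unfold bb gg
  rw [show k + j + 1 + 1 - k = j + 2 by omega, show k + j + 1 - (k + 1) = j by omega,
    show k + j + 1 - k = j + 1 by omega, show k + j + 2 - (k + 1) = j + 1 by omega]
  rw [Cc_succ (k + j), cb_succ (j + 1), cb_succ j, cb_succ k]
  have hx : (Nat.centralBinom k : ℝ) ≠ 0 := ne_of_gt (cb_pos k)
  have hy : (Nat.centralBinom j : ℝ) ≠ 0 := ne_of_gt (cb_pos j)
  have hc : Cc (k + j) ≠ 0 := ne_of_gt (Cc_pos (k + j))
  have hs : (16 : ℝ) ^ k ≠ 0 := by positivity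
  push_cast
  have hk1 : ((k : ℝ) + 1) ≠ 0 := by positivity
  have hj1 : ((j : ℝ) + 1) ≠ 0 := by positivity
  have hj2 : ((j : ℝ) + 2) ≠ 0 := by positivity
  have h2k1 : (2 * (k : ℝ) + 1) ≠ 0 := by positivity
  have h2j1 : (2 * (j : ℝ) + 1) ≠ 0 := by positivity
  have h2j3 : (2 * (j : ℝ) + 3) ≠ 0 := by positivity
  have hn3 : (2 * ((k : ℝ) + (j : ℝ)) + 3) ≠ 0 := by positivity
  have hn3' : (2 * ((k : ℝ) + (j : ℝ) + 1) + 3) ≠ 0 := by positivity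
  field_simp
  ring

lemma cbCc (n : ℕ) : (Nat.centralBinom (n + 1) : ℝ) * 3 = 4 * (2 * (n : ℝ) + 3) * 16 ^ n * Cc n := by
  have hA : ((2 * n + 2).factorial : ℝ) =
      2 ^ (n + 1) * ((n + 1).factorial : ℝ) * (Nat.doubleFactorial (2 * n + 1) : ℝ) := by
    have h1 : (2 * n + 2).factorial = Nat.doubleFactorial (2 * n + 2) * Nat.doubleFactorial (2 * n + 1) := by
      have := Nat.factorial_eq_mul_doubleFactorial (2 * n + 1)
      simpa using this
    have h2 : Nat.doubleFactorial (2 * n + 2) = 2 ^ (n + 1) * (n + 1).factorial := by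
      have := Nat.doubleFactorial_two_mul (n + 1)
      rwa [show 2 * (n + 1) = 2 * n + 2 by ring] at this
    rw [h1, h2]; push_cast; ring
  have hB : (Nat.centralBinom (n + 1) : ℝ) * ((n + 1).factorial : ℝ) ^ 2 = ((2 * n + 2).factorial : ℝ) := by
    have h := Nat.choose_mul_factorial_mul_factorial (show n + 1 ≤ 2 * (n + 1) by omega)
    rw [show 2 * (n + 1) - (n + 1) = n + 1 by omega] at h
    have : Nat.centralBinom (n + 1) * (n + 1).factorial * (n + 1).factorial = (2 * n + 2).factorial := by
      rw [Nat.centralBinom]; rw [show 2 * n + 2 = 2 * (n + 1) by ring]; exact h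
    have thisR : (Nat.centralBinom (n + 1) : ℝ) * ((n + 1).factorial : ℝ) * ((n + 1).factorial : ℝ)
        = ((2 * n + 2).factorial : ℝ) := by exact_mod_cast this
    linear_combination thisR
  have hC : ((2 * n + 3).factorial : ℝ) = (2 * (n : ℝ) + 3) * ((2 * n + 2).factorial : ℝ) := by
    rw [show 2 * n + 3 = (2 * n + 2) + 1 by ring, Nat.factorial_succ]; push_cast; ring
  unfold Cc
  have hfp : ((n + 1).factorial : ℝ) ≠ 0 := by exact_mod_cast Nat.factorial_ne_zero _
  have hD : (Nat.doubleFactorial (2 * n + 1) : ℝ) ≠ 0 := by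
    have := Nat.doubleFactorial_pos (2 * n + 1); positivity
  have h16 : (16 : ℝ) ^ n = ((2:ℝ) ^ n) ^ 4 := by
    rw [show (16:ℝ) = 2 ^ 4 by norm_num, ← pow_mul, ← pow_mul]; ring_nf
  have h22 : (2 : ℝ) ^ (2 * n) = ((2:ℝ) ^ n) ^ 2 := by rw [← pow_mul]; ring_nf
  have h21 : (2 : ℝ) ^ (n + 1) = 2 * (2:ℝ) ^ n := by ring
  have h2n : ((2:ℝ) ^ n) ≠ 0 := by positivity
  have hcb : (Nat.centralBinom (n + 1) : ℝ) =
      2 * 2 ^ n * (Nat.doubleFactorial (2 * n + 1) : ℝ) / ((n + 1).factorial : ℝ) := by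
    rw [hA, h21] at hB
    have h5 : (Nat.centralBinom (n + 1) : ℝ) * ((n + 1).factorial : ℝ) * ((n + 1).factorial : ℝ)
        = (2 * 2 ^ n * (Nat.doubleFactorial (2 * n + 1) : ℝ)) * ((n + 1).factorial : ℝ) := by
      linear_combination hB
    have h6 := mul_right_cancel₀ hfp h5
    rw [eq_div_iff hfp]
    exact h6
  rw [hcb, hC, hA, h21, h16, h22]
  field_simp
  ring

lemma boundary (n : ℕ) : gg n (n + 1) + bb (n + 1) (n + 1) = 1 / (2 * (n : ℝ) + 3) ^ 2 := by
  unfold bb gg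
  rw [show n + 1 - (n + 1) = 0 by omega, show n + 2 - (n + 1) = 1 by omega]
  rw [Nat.centralBinom_zero, show Nat.centralBinom 1 = 2 from rfl, Cc_succ n]
  have hcb : (Nat.centralBinom (n + 1) : ℝ) = 4 * (2 * (n : ℝ) + 3) * 16 ^ n * Cc n / 3 := by
    have := cbCc n; linarith
  rw [hcb]
  have hc : Cc n ≠ 0 := ne_of_gt (Cc_pos n)
  have h16 : (16 : ℝ) ^ n ≠ 0 := by positivity
  have h1 : (2 * (n:ℝ) + 3) ≠ 0 := by positivity
  have h2 : ((n:ℝ) + 2) ≠ 0 := by positivity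
  have h3 : (2 * (n:ℝ) + 5) ≠ 0 := by positivity
  have h4 : (16:ℝ) ^ (n+1) = 16 * 16 ^ n := by ring
  push_cast
  rw [h4]
  field_simp
  ring

lemma gg_zero (n : ℕ) : gg n 0 = 0 := by simp [gg]

lemma bb_zero : bb 0 0 = 1 := by
  simp [bb, Cc, Nat.centralBinom, Nat.doubleFactorial, Nat.factorial]
  norm_num

lemma sum_bb (n : ℕ) :
    ∑ k ∈ Finset.range (n + 1), bb n k = ∑ k ∈ Finset.range (n + 1), 1 / (2 * (k : ℝ) + 1) ^ 2 := by
  induction n with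
  | zero => simp [bb_zero]
  | succ n ih =>
    rw [Finset.sum_range_succ, Finset.sum_range_succ (f := fun k => 1 / (2 * (k : ℝ) + 1) ^ 2)]
    have h1 : ∀ k ∈ Finset.range (n + 1), bb (n + 1) k = bb n k + (gg n (k + 1) - gg n k) := by
      intro k hk
      have hkn : k ≤ n := Nat.lt_succ_iff.mp (Finset.mem_range.mp hk)
      have hj := wz_step (n - k) k
      rw [show k + (n - k) = n from by omega] at hj
      linarith [hj]
    rw [Finset.sum_congr rfl h1, Finset.sum_add_distrib, ih,
      Finset.sum_range_sub (f := gg n), gg_zero]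
    have hb := boundary n
    push_cast
    rw [show (2 * ((n:ℝ) + 1) + 1) ^ 2 = (2 * (n:ℝ) + 3) ^ 2 by ring]
    linarith [hb]

lemma summable_inv_sq_add : Summable (fun m : ℕ => 1 / ((m : ℝ) + 1) ^ 2) := by
  have h := (summable_nat_add_iff 1).2 (Real.summable_one_div_nat_pow.mpr (by norm_num : 1 < 2))
  refine h.congr fun m => ?_
  push_cast
  ring

lemma summable_half : Summable (fun m : ℕ => 1 / ((1 : ℝ) / 2 + m) ^ 2) := by
  refine Summable.of_nonneg_of_le (fun m => by positivity) (fun m => ?_)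
    (summable_inv_sq_add.mul_left 4)
  rw [show (4 : ℝ) * (1 / ((m : ℝ) + 1) ^ 2) = 4 / ((m : ℝ) + 1) ^ 2 by ring,
    div_le_div_iff₀ (by positivity) (by positivity)]
  nlinarith [sq_nonneg ((m : ℝ)), Nat.cast_nonneg (α := ℝ) m]

lemma summable_odd : Summable (fun m : ℕ => 1 / (2 * (m : ℝ) + 1) ^ 2) := by
  refine Summable.of_nonneg_of_le (fun m => by positivity) (fun m => ?_) summable_inv_sq_add
  rw [div_le_div_iff₀ (by positivity) (by positivity)]
  nlinarith [sq_nonneg ((m : ℝ)), Nat.cast_nonneg (α := ℝ) m]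

lemma odd_sq_sum : ∑' m : ℕ, 1 / (2 * (m : ℝ) + 1) ^ 2 = π ^ 2 / 8 := by
  have hf : Summable (fun n : ℕ => 1 / (n : ℝ) ^ 2) :=
    Real.summable_one_div_nat_pow.mpr (by norm_num)
  have htot : ∑' n : ℕ, 1 / (n : ℝ) ^ 2 = π ^ 2 / 6 := hasSum_zeta_two.tsum_eq
  have heq : (fun m : ℕ => 1 / ((2 * m : ℕ) : ℝ) ^ 2) = fun m : ℕ => (1 / 4) * (1 / (m : ℝ) ^ 2) := by
    funext m
    push_cast
    rw [mul_pow]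
    rw [one_div, one_div, one_div, mul_inv]
    ring
  have he : Summable (fun m : ℕ => 1 / ((2 * m : ℕ) : ℝ) ^ 2) := by
    rw [heq]; exact hf.mul_left _
  have ho : Summable (fun m : ℕ => 1 / ((2 * m + 1 : ℕ) : ℝ) ^ 2) := by
    refine summable_odd.congr fun m => ?_
    push_cast; ring
  have hsplit := tsum_even_add_odd he ho (f := fun n : ℕ => 1 / (n : ℝ) ^ 2)
  have heven : ∑' m : ℕ, 1 / ((2 * m : ℕ) : ℝ) ^ 2 = π ^ 2 / 24 := by
    rw [heq, tsum_mul_left, htot]; ring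
  have hoeq : ∑' m : ℕ, 1 / ((2 * m + 1 : ℕ) : ℝ) ^ 2 = ∑' m : ℕ, 1 / (2 * (m : ℝ) + 1) ^ 2 :=
    tsum_congr fun m => by push_cast; ring
  rw [htot, heven, hoeq] at hsplit
  linarith

lemma trigamma_half : trigamma (1 / 2) = π ^ 2 / 2 := by
  unfold trigamma
  have : ∑' m : ℕ, 1 / ((1 : ℝ) / 2 + m) ^ 2 = ∑' m : ℕ, 4 * (1 / (2 * (m : ℝ) + 1) ^ 2) := by
    refine tsum_congr fun m => ?_
    have h1 : ((1 : ℝ) / 2 + m) ≠ 0 := by positivity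
    have h2 : (2 * (m : ℝ) + 1) ≠ 0 := by positivity
    field_simp
    ring
  rw [this, tsum_mul_left, odd_sq_sum]
  ring

lemma trigamma_shift (n : ℕ) :
    trigamma ((n : ℝ) + 3 / 2) =
      trigamma (1 / 2) - ∑ k ∈ Finset.range (n + 1), 1 / ((1 : ℝ) / 2 + k) ^ 2 := by
  have h := Summable.sum_add_tsum_nat_add (f := fun m : ℕ => 1 / ((1 : ℝ) / 2 + m) ^ 2) (n + 1) summable_half
  unfold trigamma
  have h2 : ∑' m : ℕ, 1 / ((n : ℝ) + 3 / 2 + m) ^ 2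
      = ∑' m : ℕ, 1 / ((1 : ℝ) / 2 + ((m + (n + 1) : ℕ) : ℝ)) ^ 2 := by
    refine tsum_congr fun m => ?_
    push_cast
    ring_nf
  rw [h2]
  linarith [h]

lemma trigamma_eval (n : ℕ) :
    π ^ 2 - 2 * trigamma ((n : ℝ) + 3 / 2) =
      8 * ∑ k ∈ Finset.range (n + 1), 1 / (2 * (k : ℝ) + 1) ^ 2 := by
  rw [trigamma_shift, trigamma_half]
  have : ∑ k ∈ Finset.range (n + 1), 1 / ((1 : ℝ) / 2 + k) ^ 2
      = ∑ k ∈ Finset.range (n + 1), 4 * (1 / (2 * (k : ℝ) + 1) ^ 2) := by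
    refine Finset.sum_congr rfl fun k _ => ?_
    have h1 : ((1 : ℝ) / 2 + k) ≠ 0 := by positivity
    have h2 : (2 * (k : ℝ) + 1) ≠ 0 := by positivity
    field_simp
    ring
  rw [this, ← Finset.mul_sum]
  ring

theorem arcsine_identity_7 (n : ℕ) :
    ∑ k ∈ Finset.range (n + 1),
      1 / ((2 * (k : ℝ) + 1) * ((n : ℝ) - k + 1) ^ 2) *
        ((Nat.choose (2 * k) k : ℝ) / (Nat.choose (2 * (n - k + 1)) (n - k + 1) : ℝ)) *
        (1 / 2 ^ (4 * k)) =
    (3 * (Nat.doubleFactorial (2 * n + 1) : ℝ) ^ 2 /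
        (2 ^ (2 * n + 3) * (Nat.factorial (2 * n + 3) : ℝ))) *
      (π ^ 2 - 2 * trigamma ((n : ℝ) + 3 / 2)) := by
  have hterm : ∀ k ∈ Finset.range (n + 1),
      1 / ((2 * (k : ℝ) + 1) * ((n : ℝ) - k + 1) ^ 2) *
        ((Nat.choose (2 * k) k : ℝ) / (Nat.choose (2 * (n - k + 1)) (n - k + 1) : ℝ)) *
        (1 / 2 ^ (4 * k)) = Cc n * bb n k := by
    intro k hk
    have hkn : k ≤ n := Nat.lt_succ_iff.mp (Finset.mem_range.mp hk)
    have hidx : n - k + 1 = n + 1 - k := by omega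
    have hcast : ((n : ℝ) - k + 1) = ((n + 1 - k : ℕ) : ℝ) := by
      rw [Nat.cast_sub (by omega : k ≤ n + 1)]
      push_cast
      ring
    have hpow : (2 : ℝ) ^ (4 * k) = 16 ^ k := by
      rw [show (16 : ℝ) = 2 ^ 4 by norm_num, ← pow_mul]
    rw [hidx, hcast, hpow]
    unfold bb
    rw [show Nat.choose (2 * k) k = Nat.centralBinom k from rfl,
      show Nat.choose (2 * (n + 1 - k)) (n + 1 - k) = Nat.centralBinom (n + 1 - k) from rfl]
    have h1 : (2 * (k : ℝ) + 1) ≠ 0 := by positivity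
    have h2 : ((n + 1 - k : ℕ) : ℝ) ≠ 0 := by
      have h : 0 < n + 1 - k := by omega
      have : (0 : ℝ) < ((n + 1 - k : ℕ) : ℝ) := by exact_mod_cast h
      linarith
    have h3 : (16 : ℝ) ^ k ≠ 0 := by positivity
    have h4 : (Nat.centralBinom (n + 1 - k) : ℝ) ≠ 0 := ne_of_gt (cb_pos _)
    have h5 : Cc n ≠ 0 := ne_of_gt (Cc_pos n)
    field_simp
  rw [Finset.sum_congr rfl hterm, ← Finset.mul_sum, sum_bb, ]
  have h8 : (3 * (Nat.doubleFactorial (2 * n + 1) : ℝ) ^ 2 /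
      (2 ^ (2 * n + 3) * (Nat.factorial (2 * n + 3) : ℝ))) * 8 = Cc n := by
    unfold Cc
    have hf : ((2 * n + 3).factorial : ℝ) ≠ 0 := by exact_mod_cast Nat.factorial_ne_zero _
    have hp : (2 : ℝ) ^ (2 * n + 3) = 8 * 2 ^ (2 * n) := by ring
    rw [hp]
    field_simp
  rw [trigamma_eval]
  rw [← h8]
  ring
end

section
/- For all real x with |x| < 1, 2x·arcsin(x)/√(1−x²) = ∑_{ℓ=1}^{∞} (2x)^(2ℓ) / (ℓ·C(2ℓ,ℓ)). -/
open Real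

/-- Coefficients of the series for `arcsin y / √(1-y²)`. -/
private noncomputable def aa : ℕ → ℝ
  | 0 => 1
  | n + 1 => aa n * (2 * n + 2) / (2 * n + 3)

private lemma aa_pos (n : ℕ) : 0 < aa n := by
  induction n with
  | zero => exact one_pos
  | succ n ih =>
      have h1 : (0:ℝ) < 2 * n + 2 := by positivity
      have h2 : (0:ℝ) < 2 * n + 3 := by positivity
      show (0:ℝ) < aa n * (2 * n + 2) / (2 * n + 3)
      positivity

private lemma aa_le_one (n : ℕ) : aa n ≤ 1 := by
  induction n with
  | zero => exact le_refl 1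
  | succ n ih =>
      have h2 : (0:ℝ) < 2 * n + 3 := by positivity
      have hle : aa n * (2 * n + 2) / (2 * n + 3) ≤ aa n := by
        rw [div_le_iff₀ h2]
        nlinarith [aa_pos n]
      calc aa (n+1) = aa n * (2 * n + 2) / (2 * n + 3) := rfl
        _ ≤ aa n := hle
        _ ≤ 1 := ih

private lemma aa_rec (n : ℕ) : (2 * (n:ℝ) + 3) * aa (n + 1) = (2 * n + 2) * aa n := by
  have h2 : (0:ℝ) < 2 * n + 3 := by positivity
  rw [show aa (n+1) = aa n * (2 * n + 2) / (2 * n + 3) from rfl]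
  field_simp

private lemma aa_binom (n : ℕ) :
    aa n * (((n:ℝ) + 1) * (Nat.centralBinom (n + 1) : ℝ)) = 2 * 4 ^ n := by
  induction n with
  | zero =>
      have h0 : aa 0 = 1 := rfl
      rw [h0]
      norm_num [Nat.centralBinom]
  | succ n ih =>
      have hrec := aa_rec n
      have hcb : (((n:ℝ) + 1 + 1) * (Nat.centralBinom (n + 1 + 1) : ℝ))
          = 2 * (2 * n + 3) * (Nat.centralBinom (n + 1) : ℝ) := by
        have h := congrArg (fun k : ℕ => (k : ℝ)) (Nat.succ_mul_centralBinom_succ (n + 1))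
        push_cast at h ⊢
        linarith [h]
      have key : aa (n + 1) * (2 * (n:ℝ) + 3) = (2 * n + 2) * aa n := by linarith [hrec]
      push_cast
      calc aa (n+1) * (((n:ℝ) + 1 + 1) * (Nat.centralBinom (n + 1 + 1) : ℝ))
          = aa (n+1) * (2 * (n:ℝ) + 3) * (2 * (Nat.centralBinom (n + 1) : ℝ)) := by
            rw [hcb]; ring
        _ = (2 * (n:ℝ) + 2) * aa n * (2 * (Nat.centralBinom (n + 1) : ℝ)) := by rw [key]
        _ = 4 * (aa n * (((n:ℝ) + 1) * (Nat.centralBinom (n + 1) : ℝ))) := by ring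
        _ = 2 * 4 ^ (n + 1) := by rw [ih]; ring

private lemma summable_main {y : ℝ} (hy : |y| < 1) :
    Summable (fun n : ℕ => aa n * y ^ (2 * n + 1)) := by
  have hy2 : y ^ 2 < 1 := by nlinarith [sq_abs y, abs_nonneg y]
  apply Summable.of_norm_bounded (summable_geometric_of_lt_one (sq_nonneg y) hy2)
  intro n
  rw [Real.norm_eq_abs, abs_mul, abs_of_nonneg (aa_pos n).le, abs_pow]
  have h1 : |y| ^ (2 * n + 1) ≤ |y| ^ (2 * n) :=
    pow_le_pow_of_le_one (abs_nonneg y) hy.le (by omega)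
  calc aa n * |y| ^ (2 * n + 1) ≤ 1 * |y| ^ (2 * n) :=
        mul_le_mul (aa_le_one n) h1 (pow_nonneg (abs_nonneg y) _) one_pos.le
    _ = (y ^ 2) ^ n := by rw [one_mul, pow_mul, sq_abs]

private lemma summable_u {r : ℝ} (hr0 : 0 ≤ r) (hr : r < 1) :
    Summable (fun n : ℕ => (2 * (n:ℝ) + 1) * r ^ (2 * n)) := by
  have hr2 : ‖r ^ 2‖ < 1 := by
    rw [Real.norm_eq_abs, abs_of_nonneg (sq_nonneg r)]
    nlinarith
  have h1 : Summable fun n : ℕ => (n:ℝ) ^ 1 * (r ^ 2) ^ n :=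
    summable_pow_mul_geometric_of_norm_lt_one 1 hr2
  have h2 : Summable fun n : ℕ => (r ^ 2) ^ n :=
    summable_geometric_of_lt_one (sq_nonneg r) (by nlinarith)
  apply Summable.congr ((h1.mul_left 2).add h2)
  intro n
  rw [← pow_mul]
  ring

theorem arcsine_identity_15 (x : ℝ) (hx : |x| < 1) :
    HasSum (fun ℓ : ℕ =>
        (2 * x) ^ (2 * (ℓ + 1)) / (((ℓ : ℝ) + 1) * (Nat.choose (2 * (ℓ + 1)) (ℓ + 1) : ℝ)))
      (2 * x * Real.arcsin x / Real.sqrt (1 - x ^ 2)) := by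
  set F : ℝ → ℝ := fun z => ∑' n : ℕ, aa n * z ^ (2 * n + 1) with hFdef
  -- Step 1: the function φ z = F z * √(1-z²) - arcsin z has derivative 0 on (-1,1)
  have hFderiv : ∀ y : ℝ, |y| < 1 →
      HasDerivAt (fun z => F z * Real.sqrt (1 - z ^ 2) - Real.arcsin z) 0 y := by
    intro y hy
    set r : ℝ := (|y| + 1) / 2 with hrdef
    have hyr : |y| < r := by rw [hrdef]; linarith
    have hr0 : 0 ≤ r := by positivity
    have hr1 : r < 1 := by rw [hrdef]; linarith
    have hu := summable_u hr0 hr1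
    have hterm : ∀ (n : ℕ) (z : ℝ),
        HasDerivAt (fun w => aa n * w ^ (2 * n + 1))
          (aa n * ((2 * (n:ℝ) + 1) * z ^ (2 * n))) z := by
      intro n z
      have h := (hasDerivAt_pow (2 * n + 1) z).const_mul (aa n)
      simp only [Nat.add_sub_cancel] at h
      refine h.congr_deriv ?_
      push_cast
      ring
    have hbound : ∀ (n : ℕ) (z : ℝ), z ∈ Metric.ball (0:ℝ) r →
        ‖aa n * ((2 * (n:ℝ) + 1) * z ^ (2 * n))‖ ≤ (2 * (n:ℝ) + 1) * r ^ (2 * n) := by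
      intro n z hz
      rw [Metric.mem_ball, Real.dist_eq, sub_zero] at hz
      rw [Real.norm_eq_abs, abs_mul, abs_of_nonneg (aa_pos n).le, abs_mul, abs_pow,
        abs_of_nonneg (by positivity : (0:ℝ) ≤ 2 * (n:ℝ) + 1)]
      have h1 : |z| ^ (2 * n) ≤ r ^ (2 * n) := pow_le_pow_left₀ (abs_nonneg z) hz.le _
      calc aa n * ((2 * (n:ℝ) + 1) * |z| ^ (2 * n))
          ≤ 1 * ((2 * (n:ℝ) + 1) * |z| ^ (2 * n)) :=
            mul_le_mul_of_nonneg_right (aa_le_one n) (by positivity)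
        _ = (2 * (n:ℝ) + 1) * |z| ^ (2 * n) := one_mul _
        _ ≤ (2 * (n:ℝ) + 1) * r ^ (2 * n) :=
            mul_le_mul_of_nonneg_left h1 (by positivity)
    have hy0 : (0:ℝ) ∈ Metric.ball (0:ℝ) r := by
      rw [Metric.mem_ball, Real.dist_eq, sub_zero, abs_zero]
      linarith [abs_nonneg y]
    have hsum0 : Summable fun n : ℕ => aa n * (0:ℝ) ^ (2 * n + 1) :=
      summable_main (by norm_num)
    have hyball : y ∈ Metric.ball (0:ℝ) r := by
      rwa [Metric.mem_ball, Real.dist_eq, sub_zero]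
    have hF : HasDerivAt F (∑' n : ℕ, aa n * ((2 * (n:ℝ) + 1) * y ^ (2 * n))) y :=
      hasDerivAt_tsum_of_isPreconnected hu Metric.isOpen_ball
        ((convex_ball (0:ℝ) r).isPreconnected) (fun n z _ => hterm n z) hbound hy0 hsum0 hyball
    set D : ℝ := ∑' n : ℕ, aa n * ((2 * (n:ℝ) + 1) * y ^ (2 * n)) with hDdef
    have hDsum : HasSum (fun n : ℕ => aa n * ((2 * (n:ℝ) + 1) * y ^ (2 * n))) D := by
      apply Summable.hasSum
      exact Summable.of_norm_bounded hu fun n => hbound n y hyball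
    have hFy : HasSum (fun n : ℕ => aa n * y ^ (2 * n + 1)) (F y) :=
      (summable_main hy).hasSum
    have hB := hDsum.mul_left (y ^ 2)
    have hC := hFy.mul_left y
    have hBC := hB.add hC
    have hshift : HasSum
        (fun n : ℕ => aa (n + 1) * ((2 * (((n + 1 : ℕ)):ℝ) + 1) * y ^ (2 * (n + 1))))
        (D - 1) := by
      have h := (hasSum_nat_add_iff'
        (f := fun m : ℕ => aa m * ((2 * (m:ℝ) + 1) * y ^ (2 * m))) 1).mpr hDsum
      rw [show D - ∑ i ∈ Finset.range 1, aa i * ((2 * (i:ℝ) + 1) * y ^ (2 * i)) = D - 1 by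
        simp [aa]] at h
      exact h
    have hfun : (fun n : ℕ =>
        y ^ 2 * (aa n * ((2 * (n:ℝ) + 1) * y ^ (2 * n))) + y * (aa n * y ^ (2 * n + 1)))
        = fun n : ℕ => aa (n + 1) * ((2 * (((n + 1 : ℕ)):ℝ) + 1) * y ^ (2 * (n + 1))) := by
      funext n
      have hrec := aa_rec n
      push_cast
      linear_combination (-(y ^ (2 * n + 2))) * hrec
    rw [hfun] at hBC
    have hkey : y ^ 2 * D + y * F y = D - 1 := hBC.unique hshift
    -- now compute the derivative of φ
    have hy1 : y ≠ 1 := fun h => by rw [h] at hy; norm_num at hy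
    have hym1 : y ≠ -1 := fun h => by rw [h] at hy; norm_num at hy
    have hsq : (0:ℝ) < 1 - y ^ 2 := by nlinarith [sq_abs y, abs_nonneg y]
    have hspos : 0 < Real.sqrt (1 - y ^ 2) := Real.sqrt_pos.mpr hsq
    have hs2 : Real.sqrt (1 - y ^ 2) ^ 2 = 1 - y ^ 2 := Real.sq_sqrt hsq.le
    have hne : Real.sqrt (1 - y ^ 2) ≠ 0 := hspos.ne'
    have hinner : HasDerivAt (fun z : ℝ => 1 - z ^ 2) (-(2 * y)) y := by
      simpa using ((hasDerivAt_pow 2 y).const_sub 1)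
    have hsqrt : HasDerivAt (fun z : ℝ => Real.sqrt (1 - z ^ 2))
        (-y / Real.sqrt (1 - y ^ 2)) y := by
      have h := (Real.hasDerivAt_sqrt hsq.ne').comp y hinner
      refine h.congr_deriv ?_
      field_simp
    have harcsin : HasDerivAt Real.arcsin (1 / Real.sqrt (1 - y ^ 2)) y :=
      Real.hasDerivAt_arcsin hym1 hy1
    have hmul := (hF.mul hsqrt).sub harcsin
    refine hmul.congr_deriv ?_
    rw [eq_comm]
    field_simp
    linear_combination (-D) * hs2 + hkey
  -- Step 2: φ 0 = 0
  have hF0 : F 0 = 0 := by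
    rw [hFdef]
    have h : ∀ n : ℕ, aa n * (0:ℝ) ^ (2 * n + 1) = (0:ℝ) := by
      intro n; rw [zero_pow (by omega), mul_zero]
    calc (∑' n : ℕ, aa n * (0:ℝ) ^ (2 * n + 1)) = ∑' _ : ℕ, (0:ℝ) := tsum_congr h
      _ = 0 := tsum_zero
  have hφ0 : F 0 * Real.sqrt (1 - (0:ℝ) ^ 2) - Real.arcsin 0 = 0 := by
    rw [hF0]; simp
  -- Step 3: constancy gives φ x = 0
  have hconst : F x * Real.sqrt (1 - x ^ 2) - Real.arcsin x = 0 := by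
    rcases le_or_gt 0 x with hx0 | hx0
    · have habs : ∀ y ∈ Set.Icc (0:ℝ) x, |y| < 1 := by
        intro y hy
        rw [abs_lt] at hx ⊢
        constructor <;> [linarith [hy.1]; linarith [hy.2]]
      have h := constant_of_has_deriv_right_zero
        (f := fun z => F z * Real.sqrt (1 - z ^ 2) - Real.arcsin z) (a := 0) (b := x)
        (fun y hy => ((hFderiv y (habs y hy)).continuousAt).continuousWithinAt)
        (fun y hy => ((hFderiv y (habs y (Set.mem_Icc_of_Ico hy))).hasDerivWithinAt))
        x (Set.right_mem_Icc.mpr hx0)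
      exact h.trans hφ0
    · have habs : ∀ y ∈ Set.Icc x (0:ℝ), |y| < 1 := by
        intro y hy
        rw [abs_lt] at hx ⊢
        constructor <;> [linarith [hy.1]; linarith [hy.2]]
      have h := constant_of_has_deriv_right_zero
        (f := fun z => F z * Real.sqrt (1 - z ^ 2) - Real.arcsin z) (a := x) (b := 0)
        (fun y hy => ((hFderiv y (habs y hy)).continuousAt).continuousWithinAt)
        (fun y hy => ((hFderiv y (habs y (Set.mem_Icc_of_Ico hy))).hasDerivWithinAt))
        0 (Set.right_mem_Icc.mpr hx0.le)
      exact h.symm.trans hφ0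
  have hsq : (0:ℝ) < 1 - x ^ 2 := by nlinarith [sq_abs x, abs_nonneg x]
  have hspos : 0 < Real.sqrt (1 - x ^ 2) := Real.sqrt_pos.mpr hsq
  have hFx : (∑' n : ℕ, aa n * x ^ (2 * n + 1)) = Real.arcsin x / Real.sqrt (1 - x ^ 2) := by
    rw [eq_div_iff hspos.ne']
    show F x * Real.sqrt (1 - x ^ 2) = Real.arcsin x
    linarith [hconst]
  -- Step 4: conclude
  have hsum := ((summable_main hx).hasSum).mul_left (2 * x)
  rw [hFx] at hsum
  have hfun : (fun n : ℕ => 2 * x * (aa n * x ^ (2 * n + 1))) = fun ℓ : ℕ =>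
      (2 * x) ^ (2 * (ℓ + 1)) / (((ℓ : ℝ) + 1) * (Nat.choose (2 * (ℓ + 1)) (ℓ + 1) : ℝ)) := by
    funext n
    have hb := aa_binom n
    have hcb : (Nat.choose (2 * (n + 1)) (n + 1) : ℝ) = (Nat.centralBinom (n + 1) : ℝ) := by
      rw [Nat.centralBinom]
    rw [hcb]
    have hcbpos : (0:ℝ) < (Nat.centralBinom (n + 1) : ℝ) := by
      exact_mod_cast Nat.centralBinom_pos (n + 1)
    have hnp : (0:ℝ) < (n:ℝ) + 1 := by positivity
    have hpow : (2 * x) ^ (2 * (n + 1)) = 4 ^ (n + 1) * x ^ (2 * (n + 1)) := by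
      rw [mul_pow, pow_mul]; norm_num
    rw [eq_comm, hpow, div_eq_iff (mul_pos hnp hcbpos).ne']
    linear_combination (-2 * x ^ (2 * n + 2)) * hb
  rw [hfun] at hsum
  have : 2 * x * Real.arcsin x / Real.sqrt (1 - x ^ 2)
      = 2 * x * (Real.arcsin x / Real.sqrt (1 - x ^ 2)) := by ring
  rw [this]
  exact hsum
end
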